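/- For any finite family of nonnegative real numbers (x_y)_{y ∈ S}, one has Σ_{y∈S} sinh^2(x_y) ≤ sinh^2(√(Σ_{y∈S} x_y^2)). -/
import Mathlib

open Real

lemma convexOn_sinh_Ici : ConvexOn ℝ (Set.Ici (0:ℝ)) Real.sinh := by
  apply convexOn_of_deriv2_nonneg (convex_Ici 0)
    Real.continuous_sinh.continuousOn
  · exact Real.differentiable_sinh.differentiableOn
  · rw [Real.deriv_sinh]
    exact Real.differentiable_cosh.differentiableOn
  · intro x hx
    rw [interior_Ici] at hx
    have h2 : deriv^[2] Real.sinh = Real.sinh := by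
      ext y
      simp [Function.iterate_succ, Function.comp_def, Real.deriv_sinh, Real.deriv_cosh]
    rw [h2]
    exact Real.sinh_nonneg_iff.2 hx.le

lemma sinh_div_mono {a c : ℝ} (ha : 0 ≤ a) (hac : a ≤ c) :
    c * Real.sinh a ≤ a * Real.sinh c := by
  rcases eq_or_lt_of_le (ha.trans hac) with hc | hc
  · rw [← hc]; simp
  have ht0 : 0 ≤ a / c := div_nonneg ha hc.le
  have ht1 : a / c ≤ 1 := div_le_one_of_le₀ hac hc.le
  have h := convexOn_sinh_Ici.2 (Set.mem_Ici.2 (le_refl (0:ℝ)))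
    (Set.mem_Ici.2 hc.le) (sub_nonneg.2 ht1) ht0 (by ring)
  norm_num [smul_eq_mul, Real.sinh_zero] at h
  rw [div_mul_cancel₀ _ hc.ne'] at h
  have h2 : c * (a / c * Real.sinh c) = a * Real.sinh c := by field_simp
  linarith [mul_le_mul_of_nonneg_left h hc.le]

lemma sinh_sq_add_sinh_sq {a b : ℝ} (ha : 0 ≤ a) (hb : 0 ≤ b) :
    Real.sinh a ^ 2 + Real.sinh b ^ 2 ≤ Real.sinh (Real.sqrt (a ^ 2 + b ^ 2)) ^ 2 := by
  set c := Real.sqrt (a ^ 2 + b ^ 2) with hc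
  have hc0 : 0 ≤ c := Real.sqrt_nonneg _
  have hcsq : c ^ 2 = a ^ 2 + b ^ 2 := Real.sq_sqrt (by positivity)
  rcases eq_or_lt_of_le hc0 with h0 | hpos
  · have : a ^ 2 + b ^ 2 = 0 := by rw [← hcsq, ← h0]; ring
    have ha0 : a = 0 := by nlinarith [sq_nonneg a, sq_nonneg b]
    have hb0 : b = 0 := by nlinarith [sq_nonneg a, sq_nonneg b]
    simp [ha0, hb0, ← h0]
  have hac : a ≤ c := by nlinarith [sq_nonneg b]
  have hbc : b ≤ c := by nlinarith [sq_nonneg a]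
  have h1 := sinh_div_mono ha hac
  have h2 := sinh_div_mono hb hbc
  have hs1 : 0 ≤ Real.sinh a := Real.sinh_nonneg_iff.2 ha
  have hs2 : 0 ≤ Real.sinh b := Real.sinh_nonneg_iff.2 hb
  have hsc : 0 ≤ Real.sinh c := Real.sinh_nonneg_iff.2 hc0
  have q1 : c ^ 2 * Real.sinh a ^ 2 ≤ a ^ 2 * Real.sinh c ^ 2 := by nlinarith [mul_le_mul h1 h1 (by positivity : (0:ℝ) ≤ c * Real.sinh a) (by positivity : (0:ℝ) ≤ a * Real.sinh c)]
  have q2 : c ^ 2 * Real.sinh b ^ 2 ≤ b ^ 2 * Real.sinh c ^ 2 := by nlinarith [mul_le_mul h2 h2 (by positivity : (0:ℝ) ≤ c * Real.sinh b) (by positivity : (0:ℝ) ≤ b * Real.sinh c)]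
  have : c ^ 2 * (Real.sinh a ^ 2 + Real.sinh b ^ 2) ≤ c ^ 2 * Real.sinh c ^ 2 := by
    nlinarith
  exact le_of_mul_le_mul_left this (by positivity : (0:ℝ) < c ^ 2)

theorem sum_sinh_sq_le {ι : Type*} (S : Finset ι) (x : ι → ℝ)
    (hx : ∀ y ∈ S, 0 ≤ x y) :
    ∑ y ∈ S, (Real.sinh (x y)) ^ 2 ≤ (Real.sinh (Real.sqrt (∑ y ∈ S, x y ^ 2))) ^ 2 := by
  induction S using Finset.cons_induction with
  | empty => simp
  | cons a S haS ih =>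
    rw [Finset.sum_cons, Finset.sum_cons]
    have hxa : 0 ≤ x a := hx a (Finset.mem_cons_self a S)
    have hx' : ∀ y ∈ S, 0 ≤ x y := fun y hy => hx y (Finset.mem_cons.2 (Or.inr hy))
    have hsum : 0 ≤ ∑ y ∈ S, x y ^ 2 := Finset.sum_nonneg fun y _ => sq_nonneg _
    calc Real.sinh (x a) ^ 2 + ∑ y ∈ S, Real.sinh (x y) ^ 2
        ≤ Real.sinh (x a) ^ 2 + Real.sinh (Real.sqrt (∑ y ∈ S, x y ^ 2)) ^ 2 := by
          linarith [ih hx']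
      _ ≤ Real.sinh (Real.sqrt (x a ^ 2 + Real.sqrt (∑ y ∈ S, x y ^ 2) ^ 2)) ^ 2 :=
          sinh_sq_add_sinh_sq hxa (Real.sqrt_nonneg _)
      _ = Real.sinh (Real.sqrt (x a ^ 2 + ∑ y ∈ S, x y ^ 2)) ^ 2 := by
          rw [Real.sq_sqrt hsum]
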